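/- For $\sigma \in (0,1)$, $\beta > 0$, integers $1 \le j \le n$, the predictive weights of the NGG$(\sigma,\beta)$ process sum to one: $\frac{\sigma}{n}\cdot \frac{A_{n,j+1}}{B_{n,j}} + (n - j\sigma)\cdot\frac{A_{n,j}}{n\, B_{n,j}} = 1$, where $A_{n,j} = \sum_{l=0}^{n}\binom{n}{l}(-1)^l \beta^{l/\sigma}\Gamma(j - l/\sigma; \beta)$ and $B_{n,j} = \sum_{l=0}^{n-1}\binom{n-1}{l}(-1)^l\beta^{l/\sigma}\Gamma(j - l/\sigma;\beta)$, i.e., $\sigma A_{n,j+1} + (n - j\sigma) A_{n,j} = n\, B_{n,j}$. -/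

import Mathlib

open MeasureTheory Real Set Finset

/-- Upper incomplete gamma function `Γ(a; x) = ∫_x^∞ y^(a-1) e^(-y) dy`. -/
noncomputable def incGamma (a x : ℝ) : ℝ :=
  ∫ y in Set.Ioi x, y ^ (a - 1) * Real.exp (-y)

noncomputable def Angg (σ β : ℝ) (n j : ℕ) : ℝ :=
  ∑ l ∈ Finset.range (n + 1), (n.choose l : ℝ) * (-1 : ℝ) ^ l * β ^ ((l : ℝ) / σ) *
    incGamma ((j : ℝ) - (l : ℝ) / σ) β

noncomputable def Bngg (σ β : ℝ) (n j : ℕ) : ℝ :=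
  ∑ l ∈ Finset.range n, ((n - 1).choose l : ℝ) * (-1 : ℝ) ^ l * β ^ ((l : ℝ) / σ) *
    incGamma ((j : ℝ) - (l : ℝ) / σ) β

/-!
Integration by parts gives `Γ(a + 1; β) = β ^ a e^{-β} + a Γ(a; β)`. Applied to each term
`a = j - l/σ` of `A_{n,j+1}`, it turns `σ A_{n,j+1} + (n - jσ) A_{n,j}` into
`σ β ^ j e^{-β} ∑ (-1)^l C(n,l)`, which vanishes for `n ≥ 1`, plus
`∑ (n - l) C(n,l) (-1)^l β^{l/σ} Γ(j - l/σ; β) = n B_{n,j}`. For the weights it remains to see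
`B_{n,j} > 0`: by the binomial theorem `B_{n,j}` is the integral over `(β, ∞)` of the positive
function `y ^ (j-1) (1 - (β/y)^{1/σ}) ^ (n-1) e^{-y}`.
-/

open Filter Topology

lemma integrableOn_rpow_mul_exp_neg_Ioi (a : ℝ) {x : ℝ} (hx : 0 < x) :
    IntegrableOn (fun y => y ^ (a - 1) * exp (-y)) (Ioi x) :=
  integrable_of_isBigO_exp_neg one_half_pos
    ((continuousOn_id.rpow_const fun y hy => Or.inl (hx.trans_le hy).ne').mul
      continuousOn_id.neg.rexp)
    (by simpa only [mul_comm] using (Gamma_integrand_isLittleO (a - 1)).isBigO)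

lemma incGamma_add_one (a : ℝ) {x : ℝ} (hx : 0 < x) :
    incGamma (a + 1) x = x ^ a * exp (-x) + a * incGamma a x := by
  have hderiv : ∀ y ∈ Ici x, HasDerivAt (fun y => -(y ^ a * exp (-y)))
      (y ^ (a + 1 - 1) * exp (-y) - a * (y ^ (a - 1) * exp (-y))) y := by
    intro y hy
    have hpow := hasDerivAt_rpow_const (p := a) (Or.inl (hx.trans_le hy).ne')
    refine (hpow.mul (hasDerivAt_neg y).exp).neg.congr_deriv ?_
    rw [add_sub_cancel_right]
    ring
  have hlim : Tendsto (fun y => -(y ^ a * exp (-y))) atTop (𝓝 0) := by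
    simpa using (tendsto_rpow_mul_exp_neg_mul_atTop_nhds_zero a 1 one_pos).neg
  have hint := integrableOn_rpow_mul_exp_neg_Ioi (a + 1) hx
  have hint' := (integrableOn_rpow_mul_exp_neg_Ioi a hx).const_mul a
  have hparts := integral_Ioi_of_hasDerivAt_of_tendsto' hderiv (hint.sub hint') hlim
  rw [integral_sub hint hint', integral_const_mul] at hparts
  rw [incGamma, incGamma]
  linarith

lemma sum_range_choose_mul_neg_one_pow {R : Type*} [CommRing R] {n : ℕ} (hn : n ≠ 0) :
    ∑ l ∈ range (n + 1), (n.choose l : R) * (-1) ^ l = 0 := by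
  have h := congrArg (Int.cast : ℤ → R) (Int.alternating_sum_range_choose_of_ne hn)
  push_cast at h
  simpa only [mul_comm] using h

lemma sum_range_choose_mul_sub_mul {R : Type*} [CommRing R] (m : ℕ) (f : ℕ → R) :
    ∑ l ∈ range (m + 2), ((m + 1).choose l : R) * (((m + 1 : ℕ) : R) - l) * f l
      = ((m + 1 : ℕ) : R) * ∑ l ∈ range (m + 1), (m.choose l : R) * f l := by
  rw [sum_range_succ, sub_self, mul_zero, zero_mul, add_zero, mul_sum]
  refine sum_congr rfl fun l hl => ?_
  have hlm : l ≤ m + 1 := (mem_range.mp hl).le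
  have h := congrArg (Nat.cast : ℕ → R) (Nat.choose_mul_succ_eq m l)
  push_cast [Nat.cast_sub hlm] at h ⊢
  linear_combination (-f l) * h

lemma Bngg_succ (σ β : ℝ) (m j : ℕ) : Bngg σ β (m + 1) j = Angg σ β m j := rfl

lemma mul_incGamma_natCast_add_one_sub {σ β : ℝ} (hσ : σ ≠ 0) (hβ : 0 < β) (j l : ℕ) :
    σ * incGamma (((j + 1 : ℕ) : ℝ) - l / σ) β
      = σ * β ^ ((j : ℝ) - l / σ) * exp (-β) + (j * σ - l) * incGamma (j - l / σ) β := by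
  rw [show ((j + 1 : ℕ) : ℝ) - l / σ = (j - l / σ) + 1 by push_cast; ring, incGamma_add_one _ hβ]
  field_simp

theorem Angg_recurrence {σ β : ℝ} (hσ : σ ≠ 0) (hβ : 0 < β) (m j : ℕ) :
    σ * Angg σ β (m + 1) (j + 1) + (((m + 1 : ℕ) : ℝ) - j * σ) * Angg σ β (m + 1) j
      = ((m + 1 : ℕ) : ℝ) * Angg σ β m j := by
  have hsplit : σ * Angg σ β (m + 1) (j + 1) + (((m + 1 : ℕ) : ℝ) - j * σ) * Angg σ β (m + 1) j
      = σ * β ^ (j : ℝ) * exp (-β) * ∑ l ∈ range (m + 2), ((m + 1).choose l : ℝ) * (-1) ^ l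
        + ∑ l ∈ range (m + 2), ((m + 1).choose l : ℝ) * (((m + 1 : ℕ) : ℝ) - l) *
          ((-1) ^ l * β ^ ((l : ℝ) / σ) * incGamma (j - l / σ) β) := by
    simp only [Angg, mul_sum, ← sum_add_distrib]
    refine sum_congr rfl fun l _ => ?_
    have hβl : β ^ ((l : ℝ) / σ) * β ^ ((j : ℝ) - l / σ) = β ^ (j : ℝ) := by
      rw [← rpow_add hβ, add_sub_cancel]
    linear_combination ((m + 1).choose l : ℝ) * (-1) ^ l *
        (β ^ ((l : ℝ) / σ) * mul_incGamma_natCast_add_one_sub hσ hβ j l + σ * exp (-β) * hβl)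
  rw [hsplit, sum_range_choose_mul_neg_one_pow (Nat.succ_ne_zero m), sum_range_choose_mul_sub_mul,
    mul_zero, zero_add, Angg]
  simp only [mul_assoc]

noncomputable def nggIntegrand (σ β : ℝ) (m j : ℕ) (y : ℝ) : ℝ :=
  y ^ ((j : ℝ) - 1) * (1 - (β / y) ^ σ⁻¹) ^ m * exp (-y)

lemma nggIntegrand_eq_sum (σ : ℝ) {β y : ℝ} (hβ : 0 ≤ β) (hy : 0 < y) (m j : ℕ) :
    nggIntegrand σ β m j y = ∑ l ∈ range (m + 1), (m.choose l : ℝ) * (-1 : ℝ) ^ l *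
      β ^ ((l : ℝ) / σ) * (y ^ ((j : ℝ) - (l : ℝ) / σ - 1) * exp (-y)) := by
  have hpow : ∀ l : ℕ, ((β / y) ^ σ⁻¹) ^ l = β ^ ((l : ℝ) / σ) / y ^ ((l : ℝ) / σ) := by
    intro l
    rw [← rpow_natCast, ← rpow_mul (by positivity), div_rpow hβ hy.le, inv_mul_eq_div]
  have hsub : ∀ l : ℕ, y ^ ((j : ℝ) - (l : ℝ) / σ - 1) = y ^ ((j : ℝ) - 1) / y ^ ((l : ℝ) / σ) := by
    intro l
    rw [sub_right_comm, rpow_sub hy]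
  rw [nggIntegrand, sub_eq_neg_add (1 : ℝ), add_pow, mul_sum, sum_mul]
  refine sum_congr rfl fun l _ => ?_
  rw [neg_pow, hpow, hsub]
  ring

lemma integrableOn_nggIntegrand (σ : ℝ) {β : ℝ} (hβ : 0 < β) (m j : ℕ) :
    IntegrableOn (nggIntegrand σ β m j) (Ioi β) := by
  refine IntegrableOn.congr_fun ?_
    (fun _ hy => (nggIntegrand_eq_sum σ hβ.le (hβ.trans hy) m j).symm) measurableSet_Ioi
  exact integrable_finsetSum _ fun _ _ => (integrableOn_rpow_mul_exp_neg_Ioi _ hβ).const_mul _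

theorem Angg_eq_integral (σ : ℝ) {β : ℝ} (hβ : 0 < β) (m j : ℕ) :
    Angg σ β m j = ∫ y in Ioi β, nggIntegrand σ β m j y := by
  rw [setIntegral_congr_fun measurableSet_Ioi
      fun _ hy => nggIntegrand_eq_sum σ hβ.le (hβ.trans hy) m j,
    integral_finsetSum _ fun _ _ => (integrableOn_rpow_mul_exp_neg_Ioi _ hβ).const_mul _]
  simp only [integral_const_mul, Angg, incGamma]

lemma nggIntegrand_pos {σ β y : ℝ} (hσ : 0 < σ) (hβ : 0 < β) (hy : β < y) (m j : ℕ) :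
    0 < nggIntegrand σ β m j y := by
  have hy0 : 0 < y := hβ.trans hy
  have hlt : (β / y) ^ σ⁻¹ < 1 :=
    rpow_lt_one (by positivity) ((div_lt_one hy0).mpr hy) (inv_pos.mpr hσ)
  have := sub_pos.mpr hlt
  unfold nggIntegrand
  positivity

theorem Angg_pos {σ β : ℝ} (hσ : 0 < σ) (hβ : 0 < β) (m j : ℕ) : 0 < Angg σ β m j := by
  have hpos : ∀ y ∈ Ioi β, 0 < nggIntegrand σ β m j y := fun _ hy => nggIntegrand_pos hσ hβ hy m j
  have hsupp : Function.support (nggIntegrand σ β m j) ∩ Ioi β = Ioi β :=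
    inter_eq_right.mpr fun y hy => (hpos y hy).ne'
  rw [Angg_eq_integral σ hβ, setIntegral_pos_iff_support_of_nonneg_ae
      ((ae_restrict_iff' measurableSet_Ioi).mpr (ae_of_all _ fun y hy => (hpos y hy).le))
      (integrableOn_nggIntegrand σ hβ m j), hsupp, volume_Ioi]
  exact ENNReal.zero_lt_top

theorem ngg_weights_sum_to_one_general
    (σ β : ℝ) (hσ0 : 0 < σ) (hβ : 0 < β)
    (n j : ℕ) (hj1 : 1 ≤ j) (hjn : j ≤ n) :
    ((σ / n) * (Angg σ β n (j + 1) / Bngg σ β n j) +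
        ((n : ℝ) - (j : ℝ) * σ) * (Angg σ β n j / ((n : ℝ) * Bngg σ β n j)) = 1) ∧
    (σ * Angg σ β n (j + 1) + ((n : ℝ) - (j : ℝ) * σ) * Angg σ β n j
        = (n : ℝ) * Bngg σ β n j) := by
  obtain ⟨m, rfl⟩ : ∃ m, n = m + 1 := ⟨n - 1, by omega⟩
  have hkey := Angg_recurrence hσ0.ne' hβ m j
  rw [← Bngg_succ σ β m j] at hkey
  have hB : 0 < Bngg σ β (m + 1) j := Angg_pos hσ0 hβ m j
  refine ⟨?_, hkey⟩
  field_simp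
  linear_combination hkey

theorem ngg_weights_sum_to_one
    (σ β : ℝ) (hσ0 : 0 < σ) (hσ1 : σ < 1) (hβ : 0 < β)
    (n j : ℕ) (hj1 : 1 ≤ j) (hjn : j ≤ n) :
    ((σ / n) * (Angg σ β n (j + 1) / Bngg σ β n j) +
        ((n : ℝ) - (j : ℝ) * σ) * (Angg σ β n j / ((n : ℝ) * Bngg σ β n j)) = 1) ∧
    (σ * Angg σ β n (j + 1) + ((n : ℝ) - (j : ℝ) * σ) * Angg σ β n j
        = (n : ℝ) * Bngg σ β n j) :=
  ngg_weights_sum_to_one_general σ β hσ0 hβ n j hj1 hjn
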